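/- Under the setup of a longest S-cycle C (δ⁰(D) ≥ ⌈(n+k)/2⌉ - 1, k ≥ 3, C not Hamiltonian, H outside C): suppose H contains a vertex v with d^-_H(v) + d^+_H(v) ≤ |H| + k - 1. Then for any distinct vertices x_1, x_2 on C sending edges to H and any distinct vertices y_1, y_2 on C receiving edges from H (with {x_1,x_2,y_1,y_2} four distinct vertices), at least one of the following holds: both x_1v and vy_1 are edges of D, or both x_2v and vy_2 are edges of D. -/

import Mathlib

/-!
Inserting a path of `H` between consecutive vertices `C[i]`, `C[i+1]` would give a longer cycle
that still meets `S` in order. Hence for every path `u ⇝ z` in `H`, the successors of the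
in-neighbours of `u` on `C` avoid the out-neighbours of `z`, so `d⁻_C(u) + d⁺_C(z) ≤ |C|`.
Against the semidegree bound this makes `H` strongly connected (if `h'` is not reachable from `h`,
the set reachable from `h` caps `d⁺_H(h) + d⁻_H(h')` by `|H| - 2`), so no vertex of `T` is
followed on `C` by a vertex of `F`. For the low-degree vertex `v` the same count leaves at most one
position `j` with `C[j-1] ↛ v` and `v ↛ C[j]`. If both alternatives failed, each pair `x_l, y_l`
would yield such a position (the successor of `x_l`, or `y_l`); the two positions coincide, which
contradicts distinctness or the previous property.
-/

/-- `l` is a directed cycle in the digraph with edge relation `A`: at least two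
distinct vertices, with consecutive vertices (cyclically) joined by edges. -/
def IsCycleList {V : Type*} (A : V → V → Prop) (l : List V) : Prop :=
  2 ≤ l.length ∧ l.Nodup ∧ l.Chain' A ∧
    ∀ a ∈ l.getLast?, ∀ b ∈ l.head?, A a b

/-- The cycle `l` encounters the vertices `s 0, …, s (k-1)` in this cyclic order:
some rotation of `l` contains them as a sublist in this order. -/
def EncountersInOrder {V : Type*} {k : ℕ} (l : List V) (s : Fin k → V) : Prop :=
  ∃ r, List.Sublist (List.ofFn s) (l.rotate r)

open Finset

theorem Fin.val_finRotate {n : ℕ} (i : Fin n) : (finRotate n i : ℕ) = (i + 1) % n := by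
  have := i.neZero
  rw [finRotate_apply, Fin.val_add, Fin.val_one', Nat.add_mod_mod]

theorem Fin.card_map_finRotate_union {n : ℕ} {X Y : Finset (Fin n)}
    (h : ∀ i ∈ X, finRotate n i ∉ Y) : #(X.map (finRotate n).toEmbedding ∪ Y) = #X + #Y := by
  rw [card_union_of_disjoint (disjoint_left.mpr ?_), card_map]
  rintro _ hj
  obtain ⟨i, hi, rfl⟩ := mem_map.mp hj
  exact h i hi

theorem Fin.card_add_card_le_of_finRotate_notMem {n : ℕ} {X Y : Finset (Fin n)}
    (h : ∀ i ∈ X, finRotate n i ∉ Y) : #X + #Y ≤ n := by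
  simpa [Fin.card_map_finRotate_union h] using card_le_univ (X.map (finRotate n).toEmbedding ∪ Y)

theorem Fin.eq_of_finRotate_notMem {n : ℕ} {X Y : Finset (Fin n)}
    (h : ∀ i ∈ X, finRotate n i ∉ Y) (hcard : n ≤ #X + #Y + 1) {a b : Fin n}
    (haX : (finRotate n).symm a ∉ X) (haY : a ∉ Y) (hbX : (finRotate n).symm b ∉ X)
    (hbY : b ∉ Y) : a = b := by
  by_contra hab
  have hsub : X.map (finRotate n).toEmbedding ∪ Y ⊆ univ \ {a, b} := by
    intro c hc
    simp only [mem_union, mem_map_equiv] at hc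
    simp only [mem_sdiff, mem_univ, mem_insert, mem_singleton, true_and]
    rintro (rfl | rfl) <;> tauto
  have := card_le_card hsub
  rw [Fin.card_map_finRotate_union h, card_univ_sdiff, card_pair hab, Fintype.card_fin] at this
  omega

theorem List.getLast?_rotate_finRotate {α : Type*} (l : List α) (i : Fin l.length) :
    (l.rotate (finRotate _ i)).getLast? = some (l.get i) := by
  have hi := i.isLt
  rw [List.getLast?_eq_getElem?, List.length_rotate, List.getElem?_rotate (by omega),
    Fin.val_finRotate, Nat.add_mod_mod, show l.length - 1 + (i + 1) = i + l.length by omega,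
    Nat.add_mod_right, Nat.mod_eq_of_lt hi]
  simp

theorem List.head?_rotate_fin {α : Type*} (l : List α) (j : Fin l.length) :
    (l.rotate j).head? = some (l.get j) := by
  simp [List.head?_rotate j.isLt]

theorem List.exists_nodup_isChain_cons_of_reflTransGen {α : Type*} {r : α → α → Prop} {a b : α}
    (h : Relation.ReflTransGen r a b) :
    ∃ l, (a :: l).Nodup ∧ (a :: l).IsChain r ∧ (a :: l).getLast (List.cons_ne_nil _ _) = b := by
  classical
  refine Relation.ReflTransGen.head_induction_on h
    ⟨[], List.nodup_singleton _, .singleton _, rfl⟩ ?_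
  intro a c hac _ ih
  obtain ⟨l, hnd, hch, hlast⟩ := ih
  by_cases ha : a ∈ c :: l
  · -- the walk from `c` already visits `a`: keep only its part from `a` on
    obtain ⟨p, t, hpt⟩ := List.append_of_mem ha
    refine ⟨t, ?_, hch.suffix ⟨p, hpt.symm⟩, ?_⟩
    · exact (hpt ▸ hnd).sublist (List.sublist_append_right p _)
    · simp_rw [← hlast, hpt, List.getLast_append_of_ne_nil _ (List.cons_ne_nil _ _)]
  · refine ⟨c :: l, List.nodup_cons.mpr ⟨ha, hnd⟩, hch.cons_cons hac, ?_⟩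
    rwa [List.getLast_cons_cons]

section Cycles

variable {V : Type*} {A : V → V → Prop} {k : ℕ} {s : Fin k → V} {l : List V}

theorem isCycleList_iff_chain :
    IsCycleList A l ↔ 2 ≤ l.length ∧ l.Nodup ∧ Cycle.Chain A (l : Cycle V) := by
  rcases eq_or_ne l [] with rfl | hl
  · simp [IsCycleList]
  rw [Cycle.chain_ne_nil A hl, List.isChain_cons, IsCycleList, List.getLast?_eq_some_getLast hl]
  simp only [Option.mem_def, Option.some.injEq, forall_eq']
  tauto

theorem IsCycleList.rotate (h : IsCycleList A l) (n : ℕ) : IsCycleList A (l.rotate n) := by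
  rw [isCycleList_iff_chain] at h ⊢
  rwa [List.length_rotate, List.nodup_rotate, (Cycle.coe_eq_coe.mpr ⟨n, rfl⟩).symm]

theorem IsCycleList.append {q : List V} (hl : IsCycleList A l) (hqn : q.Nodup)
    (hqc : q.IsChain A) (hdisj : ∀ z ∈ q, z ∉ l) (hin : ∀ a ∈ l.getLast?, ∀ b ∈ q.head?, A a b)
    (hout : ∀ a ∈ q.getLast?, ∀ b ∈ l.head?, A a b) : IsCycleList A (l ++ q) := by
  rcases eq_or_ne q [] with rfl | hq
  · simpa using hl
  have hl0 : l ≠ [] := List.ne_nil_of_length_pos (by have := hl.1; omega)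
  refine ⟨by simpa using le_add_right hl.1, ?_, hl.2.2.1.append hqc hin, ?_⟩
  · exact List.nodup_append.mpr ⟨hl.2.1, hqn, fun a ha b hb hab => hdisj b hb (hab ▸ ha)⟩
  · rwa [List.getLast?_append_of_ne_nil _ hq, List.head?_append_of_ne_nil _ hl0]

theorem EncountersInOrder.rotate (h : EncountersInOrder l s) (n : ℕ) :
    EncountersInOrder (l.rotate n) s := by
  obtain ⟨r, hr⟩ := h
  obtain ⟨m, hm⟩ : l.rotate n ~r l.rotate r := (List.IsRotated.symm ⟨n, rfl⟩).trans ⟨r, rfl⟩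
  exact ⟨m, hm ▸ hr⟩

theorem EncountersInOrder.append (h : EncountersInOrder l s) (q : List V) :
    EncountersInOrder (l ++ q) s := by
  obtain ⟨r, hr⟩ := h
  rcases eq_or_ne l [] with rfl | hl
  · rw [List.rotate_nil, List.sublist_nil] at hr
    exact ⟨0, hr ▸ List.nil_sublist _⟩
  have hlt : r % l.length < l.length := Nat.mod_lt _ (List.length_pos_of_ne_nil hl)
  rw [← List.rotate_mod] at hr
  refine ⟨r % l.length, hr.trans ?_⟩
  have hlt' : r % l.length ≤ (l ++ q).length := by rw [List.length_append]; omega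
  rw [List.rotate_eq_drop_append_take hlt.le, List.rotate_eq_drop_append_take hlt',
    List.drop_append_of_le_length hlt.le, List.take_append_of_le_length hlt.le]
  exact (List.sublist_append_left _ q).append (List.Sublist.refl _)

end Cycles

section LongestCycle

variable {V : Type*} {A : V → V → Prop} {k : ℕ} {s : Fin k → V} {C : List V}

def IsLongestSCycle (A : V → V → Prop) (s : Fin k → V) (C : List V) : Prop :=
  IsCycleList A C ∧ EncountersInOrder C s ∧
    ∀ C' : List V, IsCycleList A C' → EncountersInOrder C' s → C'.length ≤ C.length

theorem IsLongestSCycle.no_insertable_path (hC : IsLongestSCycle A s C) {q : List V}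
    (hq : q ≠ []) (hqn : q.Nodup) (hqc : q.IsChain A) (hdisj : ∀ z ∈ q, z ∉ C)
    (i : Fin C.length) (hin : ∀ b ∈ q.head?, A (C.get i) b)
    (hout : ∀ a ∈ q.getLast?, A a (C.get (finRotate _ i))) : False := by
  obtain ⟨hcyc, henc, hmax⟩ := hC
  have hlonger := hmax _
    ((hcyc.rotate (finRotate _ i)).append hqn hqc (by simpa using hdisj)
      (by
        rw [List.getLast?_rotate_finRotate]
        exact fun a ha b hb => Option.mem_some_iff.mp ha ▸ hin b hb)
      (by
        rw [List.head?_rotate_fin]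
        exact fun a ha b hb => Option.mem_some_iff.mp hb ▸ hout a ha))
    ((henc.rotate _).append q)
  rw [List.length_append, List.length_rotate] at hlonger
  exact hq (List.eq_nil_of_length_eq_zero (by omega))

/-- The edge relation of `H`, the subdigraph induced on the vertices off `C`. -/
def OffCycleAdj (A : V → V → Prop) (C : List V) (a b : V) : Prop :=
  a ∉ C ∧ b ∉ C ∧ A a b

theorem IsLongestSCycle.not_adj_of_reach (hC : IsLongestSCycle A s C) {u z : V} (hu : u ∉ C)
    (hr : Relation.ReflTransGen (OffCycleAdj A C) u z) (i : Fin C.length)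
    (hin : A (C.get i) u) (hout : A z (C.get (finRotate _ i))) : False := by
  obtain ⟨p, hnd, hch, hlast⟩ := List.exists_nodup_isChain_cons_of_reflTransGen hr
  refine hC.no_insertable_path (List.cons_ne_nil u p) hnd (hch.imp fun _ _ h => h.2.2)
    (hch.induction (· ∉ C) _ (fun _ _ h _ => h.2.1) fun _ => hu) i (by simpa) ?_
  rw [List.getLast?_eq_some_getLast (List.cons_ne_nil _ _), hlast]
  exact fun a ha => Option.mem_some_iff.mp ha ▸ hout

/-- Neighbours on `C` are recorded by their positions, so that the successor on `C` is
`finRotate`; `offCycleInDeg A C v` and `offCycleOutDeg A C v` below are the paper's `d⁻_H(v)`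
and `d⁺_H(v)`. -/
def cycleInNbrs (A : V → V → Prop) [DecidableRel A] (C : List V) (v : V) :
    Finset (Fin C.length) :=
  univ.filter fun i => A (C.get i) v

def cycleOutNbrs (A : V → V → Prop) [DecidableRel A] (C : List V) (v : V) :
    Finset (Fin C.length) :=
  univ.filter fun i => A v (C.get i)

def IsMissedBy (A : V → V → Prop) (C : List V) (v : V) (j : Fin C.length) : Prop :=
  ¬A (C.get ((finRotate _).symm j)) v ∧ ¬A v (C.get j)

variable [DecidableRel A]

theorem IsLongestSCycle.card_cycleInNbrs_add_card_cycleOutNbrs_le (hC : IsLongestSCycle A s C)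
    {u z : V} (hu : u ∉ C) (hr : Relation.ReflTransGen (OffCycleAdj A C) u z) :
    #(cycleInNbrs A C u) + #(cycleOutNbrs A C z) ≤ C.length :=
  Fin.card_add_card_le_of_finRotate_notMem fun i hi hi' =>
    hC.not_adj_of_reach hu hr i (mem_filter.mp hi).2 (mem_filter.mp hi').2

variable [Fintype V] [DecidableEq V]

def SemidegreeAtLeast (A : V → V → Prop) [DecidableRel A] (δ : ℕ) : Prop :=
  ∀ v : V, δ ≤ #(univ.filter fun w => A v w) ∧ δ ≤ #(univ.filter fun w => A w v)

def offCycleInDeg (A : V → V → Prop) [DecidableRel A] (C : List V) (v : V) : ℕ :=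
  #(univ.filter fun u => u ∉ C ∧ A u v)

def offCycleOutDeg (A : V → V → Prop) [DecidableRel A] (C : List V) (v : V) : ℕ :=
  #(univ.filter fun u => u ∉ C ∧ A v u)

theorem card_filter_eq_card_filter_get_add (hC : C.Nodup) (P : V → Prop) [DecidablePred P] :
    #(univ.filter P) =
      #(univ.filter fun i : Fin C.length => P (C.get i)) + #(univ.filter fun u => u ∉ C ∧ P u) := by
  have himage : (univ.filter fun i : Fin C.length => P (C.get i)).image C.get =
      univ.filter fun u => u ∈ C ∧ P u := by
    ext u
    simp only [mem_image, mem_filter, mem_univ, true_and, List.mem_iff_get]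
    constructor
    · rintro ⟨i, hi, rfl⟩
      exact ⟨⟨i, rfl⟩, hi⟩
    · rintro ⟨⟨i, rfl⟩, hi⟩
      exact ⟨i, hi, rfl⟩
  rw [← card_image_of_injective _ (List.nodup_iff_injective_get.mp hC), himage,
    ← card_union_of_disjoint (disjoint_filter.mpr fun _ _ h h' => h'.1 h.1)]
  congr 1
  ext u
  simp only [mem_filter, mem_univ, true_and, mem_union]
  tauto

theorem card_filter_notMem_add_length (hC : C.Nodup) :
    #(univ.filter fun u => u ∉ C) + C.length = Fintype.card V := by
  simpa [add_comm] using (card_filter_eq_card_filter_get_add hC fun _ => True).symm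

theorem SemidegreeAtLeast.two_mul_le {δ : ℕ} (hdeg : SemidegreeAtLeast A δ) (hC : C.Nodup)
    (u z : V) :
    2 * δ ≤ #(cycleInNbrs A C u) + #(cycleOutNbrs A C z) +
      offCycleInDeg A C u + offCycleOutDeg A C z := by
  have hin := card_filter_eq_card_filter_get_add hC fun w => A w u
  have hout := card_filter_eq_card_filter_get_add hC fun w => A z w
  unfold cycleInNbrs cycleOutNbrs offCycleInDeg offCycleOutDeg
  linarith [(hdeg u).2, (hdeg z).1]

theorem offCycleOutDeg_add_offCycleInDeg_add_two_le (hirr : Irreflexive A) {h w : V}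
    (hh : h ∉ C) (hw : w ∉ C) (hnr : ¬Relation.ReflTransGen (OffCycleAdj A C) h w) :
    offCycleOutDeg A C h + offCycleInDeg A C w + 2 ≤ #(univ.filter fun u => u ∉ C) := by
  classical
  -- the part `R` of `H` reachable from `h` holds the out-neighbours of `h`, no in-neighbour of `w`
  set H := univ.filter fun u => u ∉ C
  set R := H.filter fun u => Relation.ReflTransGen (OffCycleAdj A C) h u
  have hhR : h ∈ R := mem_filter.mpr ⟨mem_filter.mpr ⟨mem_univ _, hh⟩, .refl⟩
  have hwHR : w ∈ H \ R := by simp [R, H, hw, hnr]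
  have hout : (univ.filter fun u => u ∉ C ∧ A h u) ⊆ R.erase h := by
    intro u hu
    simp only [mem_filter, mem_univ, true_and] at hu
    simp only [mem_erase, mem_filter, mem_univ, true_and, R, H]
    exact ⟨fun e => hirr h (e ▸ hu.2), hu.1, .single ⟨hh, hu.1, hu.2⟩⟩
  have hin : (univ.filter fun u => u ∉ C ∧ A u w) ⊆ (H \ R).erase w := by
    intro u hu
    simp only [mem_filter, mem_univ, true_and] at hu
    simp only [mem_erase, mem_sdiff, mem_filter, mem_univ, true_and, R, H]
    exact ⟨fun e => hirr w (e ▸ hu.2), hu.1, fun hr => hnr (hr.2.tail ⟨hu.1, hw, hu.2⟩)⟩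
  have hRH : #(H \ R) = #H - #R := card_sdiff_of_subset (filter_subset _ _)
  have hout' := card_le_card hout
  have hin' := card_le_card hin
  rw [card_erase_of_mem hhR] at hout'
  rw [card_erase_of_mem hwHR] at hin'
  have := card_pos.mpr ⟨_, hhR⟩
  have := card_pos.mpr ⟨_, hwHR⟩
  unfold offCycleOutDeg offCycleInDeg
  omega

theorem IsLongestSCycle.reflTransGen_offCycleAdj (hC : IsLongestSCycle A s C)
    (hirr : Irreflexive A) {δ : ℕ} (hdeg : SemidegreeAtLeast A δ)
    (hδ : Fintype.card V < 2 * δ + 2) {h h' : V} (hh : h ∉ C) (hh' : h' ∉ C) :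
    Relation.ReflTransGen (OffCycleAdj A C) h h' := by
  by_contra hnr
  have hn := card_filter_notMem_add_length (V := V) hC.1.2.1
  have hb := offCycleOutDeg_add_offCycleInDeg_add_two_le hirr hh hh' hnr
  by_cases hr : Relation.ReflTransGen (OffCycleAdj A C) h' h
  · have := hC.card_cycleInNbrs_add_card_cycleOutNbrs_le hh' hr
    have := hdeg.two_mul_le hC.1.2.1 h' h
    omega
  · have hb' := offCycleOutDeg_add_offCycleInDeg_add_two_le hirr hh' hh hr
    have := hC.card_cycleInNbrs_add_card_cycleOutNbrs_le hh .refl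
    have := hC.card_cycleInNbrs_add_card_cycleOutNbrs_le hh' .refl
    have := hdeg.two_mul_le hC.1.2.1 h h
    have := hdeg.two_mul_le hC.1.2.1 h' h'
    omega

/-- The paper's Corollary FTcor: no vertex of `T` is followed on `C` by a vertex of `F`. -/
theorem IsLongestSCycle.not_toOff_and_succ_fromOff (hC : IsLongestSCycle A s C)
    (hirr : Irreflexive A) {δ : ℕ} (hdeg : SemidegreeAtLeast A δ)
    (hδ : Fintype.card V < 2 * δ + 2) (i : Fin C.length) :
    ¬((∃ a, a ∉ C ∧ A (C.get i) a) ∧ ∃ b, b ∉ C ∧ A b (C.get (finRotate _ i))) := by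
  rintro ⟨⟨a, ha, hia⟩, b, hb, hbi⟩
  exact hC.not_adj_of_reach ha (hC.reflTransGen_offCycleAdj hirr hdeg hδ ha hb) i hia hbi

theorem IsLongestSCycle.isMissedBy_of_not_adj (hC : IsLongestSCycle A s C)
    (hirr : Irreflexive A) {δ : ℕ} (hdeg : SemidegreeAtLeast A δ)
    (hδ : Fintype.card V < 2 * δ + 2) {v : V} (hv : v ∉ C) {i j : Fin C.length}
    (hi : ∃ a, a ∉ C ∧ A (C.get i) a) (hj : ∃ b, b ∉ C ∧ A b (C.get j))
    (hij : ¬(A (C.get i) v ∧ A v (C.get j))) :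
    IsMissedBy A C v (finRotate _ i) ∨ IsMissedBy A C v j := by
  have hFT := hC.not_toOff_and_succ_fromOff hirr hdeg hδ
  by_cases hiv : A (C.get i) v
  · refine .inr ⟨fun hjv => hFT _ ⟨⟨v, hv, hjv⟩, ?_⟩, fun hvj => hij ⟨hiv, hvj⟩⟩
    rwa [Equiv.apply_symm_apply]
  · exact .inl ⟨by rwa [Equiv.symm_apply_apply], fun hvi => hFT i ⟨hi, v, hv, hvi⟩⟩

theorem IsLongestSCycle.isMissedBy_unique (hC : IsLongestSCycle A s C) {δ : ℕ}
    (hdeg : SemidegreeAtLeast A δ) (hnk : Fintype.card V + k ≤ 2 * δ + 2) {v : V} (hv : v ∉ C)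
    (hvdeg : offCycleInDeg A C v + offCycleOutDeg A C v ≤ #(univ.filter fun u => u ∉ C) + k - 1)
    {a b : Fin C.length} (ha : IsMissedBy A C v a) (hb : IsMissedBy A C v b) : a = b := by
  have hn := card_filter_notMem_add_length (V := V) hC.1.2.1
  have := hdeg.two_mul_le hC.1.2.1 v v
  have : 0 < #(univ.filter fun u => u ∉ C) := card_pos.mpr ⟨v, by simpa using hv⟩
  refine Fin.eq_of_finRotate_notMem (X := cycleInNbrs A C v) (Y := cycleOutNbrs A C v)
    (fun i hi hi' => hC.not_adj_of_reach hv .refl i (mem_filter.mp hi).2 (mem_filter.mp hi').2)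
    (by omega) ?_ ?_ ?_ ?_
  · exact fun h => ha.1 (mem_filter.mp h).2
  · exact fun h => ha.2 (mem_filter.mp h).2
  · exact fun h => hb.1 (mem_filter.mp h).2
  · exact fun h => hb.2 (mem_filter.mp h).2

end LongestCycle

theorem low_degree_vertex_in_H_general
    {V : Type*} [Fintype V] [DecidableEq V]
    (A : V → V → Prop) [DecidableRel A] (hirr : Irreflexive A)
    (n k : ℕ) (hn : n = Fintype.card V) (hk : 3 ≤ k)
    (hdeg : ∀ v : V, (n + k + 1) / 2 - 1 ≤ (Finset.univ.filter fun w => A v w).card ∧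
                     (n + k + 1) / 2 - 1 ≤ (Finset.univ.filter fun w => A w v).card)
    (s : Fin k → V)
    (C : List V) (hC : IsCycleList A C) (hCs : EncountersInOrder C s)
    (hmax : ∀ C' : List V, IsCycleList A C' → EncountersInOrder C' s → C'.length ≤ C.length)
    (v : V) (hv : v ∉ C)
    (hvdeg : (Finset.univ.filter fun u => u ∉ C ∧ A u v).card +
             (Finset.univ.filter fun u => u ∉ C ∧ A v u).card ≤
             (Finset.univ.filter fun u => (u ∉ C : Prop)).card + k - 1)
    (x₁ x₂ y₁ y₂ : V) (hdist : ([x₁, x₂, y₁, y₂] : List V).Nodup)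
    (hx₁ : x₁ ∈ C ∧ ∃ h, h ∉ C ∧ A x₁ h) (hx₂ : x₂ ∈ C ∧ ∃ h, h ∉ C ∧ A x₂ h)
    (hy₁ : y₁ ∈ C ∧ ∃ h, h ∉ C ∧ A h y₁) (hy₂ : y₂ ∈ C ∧ ∃ h, h ∉ C ∧ A h y₂) :
    (A x₁ v ∧ A v y₁) ∨ (A x₂ v ∧ A v y₂) := by
  have hLong : IsLongestSCycle A s C := ⟨hC, hCs, hmax⟩
  have hnk : Fintype.card V + k ≤ 2 * ((n + k + 1) / 2 - 1) + 2 := by omega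
  have hδ : Fintype.card V < 2 * ((n + k + 1) / 2 - 1) + 2 := by omega
  have hFT := hLong.not_toOff_and_succ_fromOff hirr hdeg hδ
  have hunique : ∀ {a b}, IsMissedBy A C v a → IsMissedBy A C v b → a = b :=
    hLong.isMissedBy_unique hdeg hnk hv hvdeg
  obtain ⟨i₁, rfl⟩ := List.mem_iff_get.mp hx₁.1
  obtain ⟨i₂, rfl⟩ := List.mem_iff_get.mp hx₂.1
  obtain ⟨j₁, rfl⟩ := List.mem_iff_get.mp hy₁.1
  obtain ⟨j₂, rfl⟩ := List.mem_iff_get.mp hy₂.1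
  have hi : i₁ ≠ i₂ := fun h => by simp [h] at hdist
  have hj : j₁ ≠ j₂ := fun h => by simp [h] at hdist
  by_contra h
  rw [not_or] at h
  rcases hLong.isMissedBy_of_not_adj hirr hdeg hδ hv hx₁.2 hy₁.2 h.1 with h₁ | h₁ <;>
    rcases hLong.isMissedBy_of_not_adj hirr hdeg hδ hv hx₂.2 hy₂.2 h.2 with h₂ | h₂
  · exact hi ((finRotate _).injective (hunique h₁ h₂))
  · exact hFT i₁ ⟨hx₁.2, hunique h₁ h₂ ▸ hy₂.2⟩
  · exact hFT i₂ ⟨hx₂.2, hunique h₂ h₁ ▸ hy₁.2⟩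
  · exact hj (hunique h₁ h₂)

/-- Lemma (lowdegH): if $v \in H$ has $d^-_H(v)+d^+_H(v) \le |H|+k-1$ then for
distinct $x_1,x_2 \in T$ and $y_1,y_2 \in F$ we have $x_1v,vy_1 \in E$ or
$x_2v,vy_2 \in E$. -/
theorem low_degree_vertex_in_H
    {V : Type*} [Fintype V] [DecidableEq V]
    (A : V → V → Prop) [DecidableRel A] (hirr : Irreflexive A)
    (n k : ℕ) (hn : n = Fintype.card V) (hk : 3 ≤ k)
    (hdeg : ∀ v : V, (n + k + 1) / 2 - 1 ≤ (Finset.univ.filter fun w => A v w).card ∧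
                     (n + k + 1) / 2 - 1 ≤ (Finset.univ.filter fun w => A w v).card)
    (s : Fin k → V) (hs : Function.Injective s)
    (C : List V) (hC : IsCycleList A C) (hCs : EncountersInOrder C s)
    (hmax : ∀ C' : List V, IsCycleList A C' → EncountersInOrder C' s → C'.length ≤ C.length)
    (hnotHam : ∃ v : V, v ∉ C)
    (v : V) (hv : v ∉ C)
    (hvdeg : (Finset.univ.filter fun u => u ∉ C ∧ A u v).card +
             (Finset.univ.filter fun u => u ∉ C ∧ A v u).card ≤
             (Finset.univ.filter fun u => (u ∉ C : Prop)).card + k - 1)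
    (x₁ x₂ y₁ y₂ : V) (hdist : ([x₁, x₂, y₁, y₂] : List V).Nodup)
    (hx₁ : x₁ ∈ C ∧ ∃ h, h ∉ C ∧ A x₁ h) (hx₂ : x₂ ∈ C ∧ ∃ h, h ∉ C ∧ A x₂ h)
    (hy₁ : y₁ ∈ C ∧ ∃ h, h ∉ C ∧ A h y₁) (hy₂ : y₂ ∈ C ∧ ∃ h, h ∉ C ∧ A h y₂) :
    (A x₁ v ∧ A v y₁) ∨ (A x₂ v ∧ A v y₂) :=
  low_degree_vertex_in_H_general A hirr n k hn hk hdeg s C hC hCs hmax v hv hvdeg x₁ x₂ y₁ y₂ hdist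
    hx₁ hx₂ hy₁ hy₂
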